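/- Let K be a field, f ∈ K[z] of degree n ≥ 1, and let h_1, ..., h_n ∈ K(z) be nonzero elements whose z-degrees (degree of numerator minus degree of denominator) are pairwise incongruent modulo n. Then h_1, ..., h_n form a basis of K(z) over K(f(z)). -/

import Mathlib

open Polynomial IntermediateField

/-!
Every nonzero element `r(f)/s(f)` of `K(f)` has `z`-degree `n (deg r - deg s)`, a multiple of `n`.
Hence in a relation `∑ cᵢ hᵢ = 0` with `cᵢ ∈ K(f)` the nonzero terms have `z`-degrees
`deg cᵢ + deg hᵢ` in pairwise distinct classes modulo `n`; for the valuation at infinity the term of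
largest degree dominates, so the sum cannot vanish. Thus the `hᵢ` are linearly independent, and
since `[K(z) : K(f)] = n` they form a basis.
-/

theorem Valuation.sum_ne_zero_of_injOn {R Γ₀ ι : Type*} [DivisionRing R]
    [LinearOrderedCommGroupWithZero Γ₀]
    (v : Valuation R Γ₀) {s : Finset ι} {x : ι → R} (hs : s.Nonempty) (hx : ∀ i ∈ s, x i ≠ 0)
    (hinj : Set.InjOn (fun i => v (x i)) s) : ∑ i ∈ s, x i ≠ 0 := by
  classical
  obtain ⟨j, hj, hmax⟩ := s.exists_max_image (fun i => v (x i)) hs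
  have hlt : ∀ i ∈ s \ {j}, v (x i) < v (x j) := fun i hi => by
    obtain ⟨his, hij⟩ := Finset.mem_sdiff.mp hi
    exact (hmax i his).lt_of_ne fun h => hij (Finset.mem_singleton.mpr (hinj his hj h))
  rw [← v.ne_zero_iff, v.map_sum_eq_of_lt hj hlt, v.ne_zero_iff]
  exact hx j hj

namespace RatFunc

variable {K : Type*} [Field K]

theorem sum_ne_zero_of_intDegree_injOn {ι : Type*} {s : Finset ι} {x : ι → RatFunc K}
    (hs : s.Nonempty) (hx : ∀ i ∈ s, x i ≠ 0) (hinj : Set.InjOn (fun i => (x i).intDegree) s) :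
    ∑ i ∈ s, x i ≠ 0 := by
  classical
  refine (inftyValuation K).sum_ne_zero_of_injOn hs hx fun i hi j hj hij => hinj hi hj ?_
  simpa [inftyValuation_apply, hx i hi, hx j hj] using hij

theorem natDegree_dvd_intDegree_of_mem_adjoin {f : K[X]} {x : RatFunc K}
    (hx : x ∈ K⟮algebraMap K[X] (RatFunc K) f⟯) (hx0 : x ≠ 0) :
    (f.natDegree : ℤ) ∣ x.intDegree := by
  obtain ⟨r, s, rfl⟩ := (mem_adjoin_simple_iff K x).mp hx
  simp only [aeval_algebraMap_apply, ← comp_eq_aeval] at hx0 ⊢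
  obtain ⟨hr, hs⟩ := div_ne_zero_iff.mp hx0
  rw [intDegree_div hr hs, intDegree_polynomial, intDegree_polynomial, natDegree_comp,
    natDegree_comp]
  exact ⟨r.natDegree - s.natDegree, by push_cast; ring⟩

theorem linearIndependent_of_intDegree_not_modEq {ι : Type*} {F : Subfield (RatFunc K)} {n : ℕ}
    (hF : ∀ c ∈ F, c ≠ 0 → (n : ℤ) ∣ c.intDegree) {h : ι → RatFunc K} (hne : ∀ i, h i ≠ 0)
    (hmod : Pairwise fun i j => ¬ (h i).intDegree ≡ (h j).intDegree [ZMOD n]) :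
    LinearIndependent F h := by
  classical
  rw [linearIndependent_iff']
  intro s c hsum
  by_contra! hc
  obtain ⟨i, hi, hci⟩ := hc
  set t := s.filter fun j => c j • h j ≠ 0
  have hcoe : ∀ j ∈ t, (c j : RatFunc K) ≠ 0 := fun j hj =>
    left_ne_zero_of_mul (Finset.mem_filter.mp hj).2
  refine sum_ne_zero_of_intDegree_injOn (s := t)
    ⟨i, Finset.mem_filter.mpr ⟨hi, smul_ne_zero hci (hne i)⟩⟩
    (fun j hj => (Finset.mem_filter.mp hj).2)
    (fun j hj k hk hjk => ?_) (by rwa [Finset.sum_filter_ne_zero])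
  by_contra hne_jk
  apply hmod hne_jk
  simp only [Subfield.smul_def, smul_eq_mul] at hjk
  rw [intDegree_mul (hcoe j hj) (hne j), intDegree_mul (hcoe k hk) (hne k)] at hjk
  obtain ⟨a, ha⟩ := hF _ (c j).2 (hcoe j hj)
  obtain ⟨b, hb⟩ := hF _ (c k).2 (hcoe k hk)
  exact Int.modEq_iff_dvd.mpr ⟨a - b, by linear_combination ha - hb - hjk⟩

end RatFunc

/-- `n` nonzero rational functions whose `z`-degrees (numerator degree minus denominator
degree) are pairwise incongruent modulo `n = deg f` form a basis of `K(z)` over `K(f(z))`. -/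
theorem stmt19 (K : Type*) [Field K] (f : K[X]) (n : ℕ) (hn : 1 ≤ n)
    (hdeg : f.natDegree = n)
    (F : IntermediateField K (RatFunc K))
    (hF : F = IntermediateField.adjoin K {algebraMap K[X] (RatFunc K) f})
    (h : Fin n → RatFunc K) (hne : ∀ i, h i ≠ 0)
    (hmod : ∀ i j : Fin n, i ≠ j →
      ¬ ((h i).intDegree ≡ (h j).intDegree [ZMOD (n : ℤ)])) :
    ∃ b : Module.Basis (Fin n) F (RatFunc K), ∀ i, b i = h i := by
  subst hdeg
  have hind : LinearIndependent F h :=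
    RatFunc.linearIndependent_of_intDegree_not_modEq (F := F.toSubfield)
      (fun _ hc hc0 => RatFunc.natDegree_dvd_intDegree_of_mem_adjoin (hF ▸ hc) hc0) hne hmod
  have hcard : Fintype.card (Fin f.natDegree) = Module.finrank F (RatFunc K) := by
    subst hF
    rw [RatFunc.finrank_eq_max_natDegree, RatFunc.num_algebraMap, RatFunc.denom_algebraMap,
      natDegree_one, max_zero, Fintype.card_fin]
  have : Nonempty (Fin f.natDegree) := ⟨⟨0, hn⟩⟩
  exact ⟨basisOfLinearIndependentOfCardEqFinrank hind hcard, by simp⟩
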